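/- arXiv:2506.12578 — 4 statements merged into one kernel-verified Lean document; each statement's English description precedes it below -/
import Mathlib

section
/- Every finite rank continuous operator from a normed lattice E to a normed lattice F is a Levi operator. -/
/-!
For a continuous functional `g` and a norm-bounded increasing net `x`, the scalars `g (x α)` form
a Cauchy net: if `u j ≥ 0` are increments of `x` along a chain, then `|∑ ±u j| ≤ ∑ u j` in the
lattice order, so choosing the signs of the `g (u j)` and using solidity of the norm gives
`∑ |g (u j)| ≤ 2 * C * ‖g‖`. Writing `T = ∑ f k ⊗ y k`, the limits of the `f k (x α)` are attained
by some `x₀`, because the range of `x ↦ (f k x)ₖ` is finite-dimensional, hence closed. Then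
`|T (x α) - T x₀|` is eventually below `r • ∑ |y k|` for every `r > 0`, and such relatively uniform
convergence is order convergence.
-/

/-- Order convergence of a net. -/
def OConvNet {ι F : Type*} [Preorder ι] [Lattice F] [AddCommGroup F]
    (x : ι → F) (x₀ : F) : Prop :=
  ∃ D : Set F, D.Nonempty ∧ DirectedOn (· ≥ ·) D ∧ IsGLB D 0 ∧
    ∀ y ∈ D, ∃ α₀, ∀ α, α₀ ≤ α → |x α - x₀| ≤ y

/-- Order convergence of a sequence. -/
def OConvSeq {F : Type*} [Lattice F] [AddCommGroup F] (x : ℕ → F) (x₀ : F) : Prop :=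
  ∃ y : ℕ → F, Antitone y ∧ IsGLB (Set.range y) 0 ∧
    ∀ m, ∃ n₀, ∀ n, n₀ ≤ n → |x n - x₀| ≤ y m

/-- A net is order-Cauchy if its double net of differences order converges to `0`. -/
def OCauchyNet {ι F : Type*} [Preorder ι] [Lattice F] [AddCommGroup F]
    (x : ι → F) : Prop :=
  OConvNet (fun p : ι × ι => x p.1 - x p.2) (0 : F)

/-- A sequence is order-Cauchy if its double sequence of differences order converges to `0`. -/
def OCauchySeq' {F : Type*} [Lattice F] [AddCommGroup F] (x : ℕ → F) : Prop :=
  OConvNet (fun p : ℕ × ℕ => x p.1 - x p.2) (0 : F)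

section Maps
variable {E F : Type*} [Lattice E] [AddCommGroup E] [Norm E] [Lattice F] [AddCommGroup F]

def IsLeviMap (T : E → F) : Prop :=
  ∀ (ι : Type) [Nonempty ι] [Preorder ι] [IsDirected ι (· ≤ ·)],
    ∀ x : ι → E, Monotone x → (∃ C, ∀ α, ‖x α‖ ≤ C) →
      ∃ x₀ : E, OConvNet (fun α => T (x α)) (T x₀)

def IsSigmaLeviMap (T : E → F) : Prop :=
  ∀ x : ℕ → E, Monotone x → (∃ C, ∀ n, ‖x n‖ ≤ C) →
    ∃ x₀ : E, OConvSeq (fun n => T (x n)) (T x₀)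

def IsCqLeviMap (T : E → F) : Prop :=
  ∀ (ι : Type) [Nonempty ι] [Preorder ι] [IsDirected ι (· ≤ ·)],
    ∀ x : ι → E, Monotone x → (∃ C, ∀ α, ‖x α‖ ≤ C) →
      ∃ y₀ : F, OConvNet (fun α => T (x α)) y₀

def IsCqSigmaLeviMap (T : E → F) : Prop :=
  ∀ x : ℕ → E, Monotone x → (∃ C, ∀ n, ‖x n‖ ≤ C) →
    ∃ y₀ : F, OConvSeq (fun n => T (x n)) y₀

def IsQLeviMap (T : E → F) : Prop :=
  ∀ (ι : Type) [Nonempty ι] [Preorder ι] [IsDirected ι (· ≤ ·)],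
    ∀ x : ι → E, Monotone x → (∃ C, ∀ α, ‖x α‖ ≤ C) →
      OCauchyNet (fun α => T (x α))

def IsQSigmaLeviMap (T : E → F) : Prop :=
  ∀ x : ℕ → E, Monotone x → (∃ C, ∀ n, ‖x n‖ ≤ C) →
    OCauchySeq' (fun n => T (x n))

end Maps

open Filter Topology Set Finset

lemma nonneg_of_two_pow_nsmul_nonneg {G : Type*} [AddCommGroup G] [Lattice G]
    [IsOrderedAddMonoid G] {w : G} (m : ℕ) (h : 0 ≤ 2 ^ m • w) : 0 ≤ w := by
  induction m with
  | zero => simpa using h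
  | succ m ih => exact ih (nsmul_two_semiclosed (by rwa [← mul_nsmul, ← pow_succ]))

lemma abs_smul_le {R M : Type*} [Ring R] [LinearOrder R] [IsOrderedRing R] [AddCommGroup M]
    [Lattice M] [IsOrderedAddMonoid M] [Module R M] [PosSMulMono R M] (r : R) (v : M) :
    |r • v| ≤ |r| • |v| := by
  rcases le_total 0 r with hr | hr
  · rw [abs_of_nonneg hr]
    refine abs_le'.2 ⟨smul_le_smul_of_nonneg_left (le_abs_self v) hr, ?_⟩
    rw [← smul_neg]
    exact smul_le_smul_of_nonneg_left (neg_le_abs v) hr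
  · rw [abs_of_nonpos hr]
    refine abs_le'.2 ⟨?_, ?_⟩
    · rw [← neg_smul_neg]
      exact smul_le_smul_of_nonneg_left (neg_le_abs v) (neg_nonneg.2 hr)
    · rw [← neg_smul]
      exact smul_le_smul_of_nonneg_left (le_abs_self v) (neg_nonneg.2 hr)

lemma abs_sum_smul_le {R M κ : Type*} [Ring R] [LinearOrder R] [IsOrderedRing R] [AddCommGroup M]
    [Lattice M] [IsOrderedAddMonoid M] [Module R M] [PosSMulMono R M]
    (s : Finset κ) (a : κ → R) (v : κ → M) :
    |∑ k ∈ s, a k • v k| ≤ ∑ k ∈ s, |a k| • |v k| :=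
  (Finset.le_sum_of_subadditive _ abs_zero.le abs_add_le s _).trans
    (Finset.sum_le_sum fun k _ => abs_smul_le (a k) (v k))

section NormedLattice

variable {E : Type*} [NormedAddCommGroup E] [Lattice E] [HasSolidNorm E] [IsOrderedAddMonoid E]
  [NormedSpace ℝ E]

/-- The positive cone is closed, so `r • v` is a limit of dyadic multiples `(k / 2 ^ m) • v`,
which are nonnegative because `2 ^ m • ((k / 2 ^ m) • v) = k • v`. -/
lemma HasSolidNorm.smul_nonneg {r : ℝ} (hr : 0 ≤ r) {v : E} (hv : 0 ≤ v) : 0 ≤ r • v := by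
  set q : ℕ → ℝ := fun m => (⌊r * 2 ^ m⌋₊ : ℝ) / 2 ^ m
  have hq : Tendsto q atTop (𝓝 r) :=
    (tendsto_nat_floor_mul_div_atTop hr).comp (tendsto_pow_atTop_atTop_of_one_lt one_lt_two)
  have hqv : ∀ m, 0 ≤ q m • v := fun m => by
    refine nonneg_of_two_pow_nsmul_nonneg m ?_
    have h2m : (2 : ℝ) ^ m * q m = ⌊r * 2 ^ m⌋₊ := by simp only [q]; field_simp
    rw [← Nat.cast_smul_eq_nsmul ℝ, smul_smul, Nat.cast_pow, Nat.cast_ofNat, h2m,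
      Nat.cast_smul_eq_nsmul]
    exact nsmul_nonneg hv _
  exact isClosed_nonneg.mem_of_tendsto (hq.smul_const v) (Eventually.of_forall hqv)

instance HasSolidNorm.isOrderedModule : IsOrderedModule ℝ E :=
  .of_smul_nonneg fun _ hr _ hv => HasSolidNorm.smul_nonneg hr hv

lemma sum_abs_apply_le_opNorm_mul (g : E →L[ℝ] ℝ) {κ : Type*} (s : Finset κ) {u : κ → E}
    (hu : ∀ k ∈ s, 0 ≤ u k) : ∑ k ∈ s, |g (u k)| ≤ ‖g‖ * ‖∑ k ∈ s, u k‖ := by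
  classical
  set v : κ → E := fun k => if 0 ≤ g (u k) then u k else -u k
  have hgv : ∀ k, g (v k) = |g (u k)| := fun k => by
    by_cases h : 0 ≤ g (u k)
    · simp only [v, if_pos h, abs_of_nonneg h]
    · simp only [v, if_neg h, map_neg, abs_of_neg (not_le.1 h)]
  have hv : ∀ k ∈ s, |v k| = u k := fun k hk => by
    by_cases h : 0 ≤ g (u k) <;>
      simp only [v, h, if_true, if_false, abs_neg, abs_of_nonneg (hu k hk)]
  have hsum : |∑ k ∈ s, v k| ≤ |∑ k ∈ s, u k| := by
    rw [abs_of_nonneg (Finset.sum_nonneg hu), ← Finset.sum_congr rfl hv]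
    exact Finset.le_sum_of_subadditive _ abs_zero.le abs_add_le s v
  calc ∑ k ∈ s, |g (u k)| = g (∑ k ∈ s, v k) := by simp only [map_sum, hgv]
    _ ≤ ‖g (∑ k ∈ s, v k)‖ := le_abs_self _
    _ ≤ ‖g‖ * ‖∑ k ∈ s, v k‖ := g.le_opNorm _
    _ ≤ ‖g‖ * ‖∑ k ∈ s, u k‖ := by gcongr; exact norm_le_norm_of_abs_le_abs hsum

section MonotoneNet

variable {ι : Type*} [Preorder ι] {x : ι → E} {C : ℝ}

/-- Otherwise there is a chain `c 0 ≤ c 1 ≤ ⋯` along which every increment of `g ∘ x` exceeds `ε`,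
while the increments of `x` are positive and sum to `x (c N) - x (c 0)`, of norm at most `2 * C`. -/
lemma Monotone.exists_forall_abs_apply_sub_le [Nonempty ι] (hx : Monotone x)
    (hC : ∀ α, ‖x α‖ ≤ C) (g : E →L[ℝ] ℝ) {ε : ℝ} (hε : 0 < ε) :
    ∃ α₀, ∀ α, α₀ ≤ α → |g (x α) - g (x α₀)| ≤ ε := by
  by_contra! h
  choose next hle hgap using h
  obtain ⟨a⟩ := ‹Nonempty ι›
  set c : ℕ → ι := fun j => next^[j] a
  have hc : ∀ j, c (j + 1) = next (c j) := fun j => Function.iterate_succ_apply' next j a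
  have hcm : Monotone c := monotone_nat_of_le_succ fun j => (hc j) ▸ hle _
  have hbound : ∀ N : ℕ, N * ε ≤ ‖g‖ * (2 * C) := fun N =>
    calc N * ε = ∑ j ∈ range N, ε := by simp
      _ ≤ ∑ j ∈ range N, |g (x (c (j + 1)) - x (c j))| :=
        Finset.sum_le_sum fun j _ => by rw [map_sub, hc]; exact (hgap _).le
      _ ≤ ‖g‖ * ‖x (c N) - x (c 0)‖ := by
        rw [← Finset.sum_range_sub (fun j => x (c j))]
        exact sum_abs_apply_le_opNorm_mul g _ fun j _ => sub_nonneg.2 (hx (hcm j.le_succ))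
      _ ≤ ‖g‖ * (2 * C) := by
        gcongr
        linarith [norm_sub_le (x (c N)) (x (c 0)), hC (c N), hC (c 0)]
  obtain ⟨N, hN⟩ := exists_nat_gt (‖g‖ * (2 * C) / ε)
  rw [div_lt_iff₀ hε] at hN
  linarith [hbound N]

lemma Monotone.exists_tendsto_apply [Nonempty ι] [IsDirected ι (· ≤ ·)] (hx : Monotone x)
    (hC : ∀ α, ‖x α‖ ≤ C) (g : E →L[ℝ] ℝ) : ∃ t, Tendsto (fun α => g (x α)) atTop (𝓝 t) := by
  refine cauchySeq_tendsto_of_complete (Metric.cauchy_iff.2 ⟨inferInstance, fun ε hε => ?_⟩)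
  obtain ⟨α₀, h⟩ := hx.exists_forall_abs_apply_sub_le hC g (by positivity : 0 < ε / 3)
  refine ⟨(fun α => g (x α)) '' Ici α₀, image_mem_map (Ici_mem_atTop α₀), ?_⟩
  rintro _ ⟨β, hβ, rfl⟩ _ ⟨γ, hγ, rfl⟩
  rw [Real.dist_eq]
  linarith [abs_sub_le (g (x β)) (g (x α₀)) (g (x γ)), abs_sub_comm (g (x α₀)) (g (x γ)),
    h β hβ, h γ hγ]

end MonotoneNet

end NormedLattice

lemma exists_forall_apply_eq_of_tendsto {E ι κ : Type*} [TopologicalSpace E] [AddCommGroup E]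
    [Module ℝ E] [Finite κ] {l : Filter ι} [l.NeBot] (f : κ → E →L[ℝ] ℝ) {x : ι → E}
    {t : κ → ℝ} (ht : ∀ k, Tendsto (fun α => f k (x α)) l (𝓝 (t k))) :
    ∃ x₀, ∀ k, f k x₀ = t k := by
  have hclosed :=
    (LinearMap.range (ContinuousLinearMap.pi f).toLinearMap).closed_of_finiteDimensional
  obtain ⟨x₀, hx₀⟩ := hclosed.mem_of_tendsto (tendsto_pi_nhds.2 ht)
    (Eventually.of_forall fun α => ⟨x α, rfl⟩)
  exact ⟨x₀, congrFun hx₀⟩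

lemma OConvNet.of_forall_eventually_abs_sub_le_smul {ι F : Type*} [Preorder ι] [Nonempty ι]
    [IsDirected ι (· ≤ ·)] [NormedAddCommGroup F] [Lattice F] [HasSolidNorm F]
    [IsOrderedAddMonoid F] [NormedSpace ℝ F] {z : ι → F} {z₀ u : F} (hu : 0 ≤ u)
    (h : ∀ r : ℝ, 0 < r → ∀ᶠ α in atTop, |z α - z₀| ≤ r • u) : OConvNet z z₀ := by
  refine ⟨(· • u) '' Ioi 0, ⟨(1 : ℝ) • u, 1, one_pos, rfl⟩, ?_, ⟨?_, fun b hb => ?_⟩, ?_⟩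
  · rintro _ ⟨r, hr, rfl⟩ _ ⟨s, hs, rfl⟩
    exact ⟨min r s • u, ⟨_, mem_Ioi.2 (lt_min hr hs), rfl⟩,
      smul_le_smul_of_nonneg_right (min_le_left r s) hu,
      smul_le_smul_of_nonneg_right (min_le_right r s) hu⟩
  · rintro _ ⟨r, hr, rfl⟩
    exact smul_nonneg (le_of_lt hr) hu
  · have hlim : Tendsto (· • u) (𝓝 (0 : ℝ)) (𝓝 0) := by
      simpa using (tendsto_id (x := 𝓝 (0 : ℝ))).smul_const u
    exact ge_of_tendsto (hlim.mono_left nhdsWithin_le_nhds)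
      (eventually_mem_nhdsWithin.mono fun r hr => hb ⟨r, hr, rfl⟩)
  · rintro _ ⟨r, hr, rfl⟩
    exact eventually_atTop.1 (h r hr)

/-- every finite rank continuous operator between normed lattices is Levi. -/
theorem finiteRank_isLevi {E F : Type*}
    [NormedAddCommGroup E] [Lattice E] [HasSolidNorm E] [IsOrderedAddMonoid E] [NormedSpace ℝ E]
    [NormedAddCommGroup F] [Lattice F] [HasSolidNorm F] [IsOrderedAddMonoid F] [NormedSpace ℝ F]
    (T : E →L[ℝ] F)
    (hfr : ∃ (n : ℕ) (f : Fin n → (E →L[ℝ] ℝ)) (y : Fin n → F),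
      ∀ x, T x = ∑ k, f k x • y k) :
    IsLeviMap (T : E → F) := by
  obtain ⟨n, f, y, hT⟩ := hfr
  intro ι _ _ _ x hx ⟨C, hC⟩
  choose t ht using fun k => hx.exists_tendsto_apply hC (f k)
  obtain ⟨x₀, hx₀⟩ := exists_forall_apply_eq_of_tendsto f ht
  refine ⟨x₀, .of_forall_eventually_abs_sub_le_smul (u := ∑ k, |y k|)
    (Finset.sum_nonneg fun k _ => abs_nonneg (y k)) fun r hr => ?_⟩
  have hclose : ∀ᶠ α in atTop, ∀ k, |f k (x α) - f k x₀| ≤ r := eventually_all.2 fun k => by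
    simpa only [hx₀, Metric.mem_closedBall, Real.dist_eq] using
      (ht k).eventually (Metric.closedBall_mem_nhds _ hr)
  filter_upwards [hclose] with α hα
  calc |T (x α) - T x₀| = |∑ k, (f k (x α) - f k x₀) • y k| := by
        simp only [hT, sub_smul, Finset.sum_sub_distrib]
    _ ≤ ∑ k, |f k (x α) - f k x₀| • |y k| := abs_sum_smul_le _ _ _
    _ ≤ ∑ k, r • |y k| := by gcongr with k; exact hα k
    _ = r • ∑ k, |y k| := Finset.smul_sum.symm
end

section
/- Every positive compact operator from a normed lattice E to a normed lattice F is a completely quasi Levi operator, i.e., for every norm-bounded increasing net (x_α) in E the net (T x_α) order-converges in F. -/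
/-!
A positive operator maps an increasing norm-bounded net to an increasing net lying in a
compact set, so the image net has a cluster point `y₀`. The upper sets `Ici (T x α)` are closed
in a normed lattice, hence `y₀` bounds the net from above; lying in the closure of the net, it is
its supremum, and an increasing net order-converges to its supremum.
-/

open Filter Set

/-- The differences `y₀ - y α` decrease to `0`, so they witness the order convergence. -/
theorem Monotone.oConvNet_of_isLUB {ι F : Type*} [Preorder ι] [Nonempty ι] [IsDirectedOrder ι]
    [Lattice F] [AddCommGroup F] [IsOrderedAddMonoid F] {y : ι → F} {y₀ : F} (hy : Monotone y)
    (hlub : IsLUB (range y) y₀) : OConvNet y y₀ := by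
  have hle : ∀ α, y α ≤ y₀ := fun α => hlub.1 (mem_range_self α)
  refine ⟨range fun α => y₀ - y α, range_nonempty _, ?_, ⟨?_, ?_⟩, ?_⟩
  · exact directedOn_range.2 fun α β => (directed_of (· ≤ ·) α β).imp
      fun γ hγ => ⟨sub_le_sub_left (hy hγ.1) y₀, sub_le_sub_left (hy hγ.2) y₀⟩
  · rintro _ ⟨α, rfl⟩
    exact sub_nonneg.2 (hle α)
  · intro u hu
    have : y₀ ≤ y₀ - u := hlub.2 <| forall_mem_range.2 fun α => le_sub_comm.1 (hu ⟨α, rfl⟩)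
    simpa using this
  · rintro _ ⟨β, rfl⟩
    refine ⟨β, fun α hβα => ?_⟩
    rw [abs_sub_comm, abs_of_nonneg (sub_nonneg.2 (hle α))]
    exact sub_le_sub_left (hy hβα) y₀

theorem Monotone.isLUB_of_mapClusterPt {ι F : Type*} [Preorder ι] [TopologicalSpace F]
    [Preorder F] [OrderClosedTopology F] {y : ι → F} {y₀ : F} (hy : Monotone y)
    (hy₀ : MapClusterPt y₀ atTop y) : IsLUB (range y) y₀ := by
  have hub : y₀ ∈ upperBounds (range y) := forall_mem_range.2 fun α =>
    isClosed_Ici.mem_of_mapClusterPt hy₀ ((eventually_ge_atTop α).mono fun β => @hy α β)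
  have hcl : y₀ ∈ closure (range y) := isClosed_closure.mem_of_mapClusterPt hy₀
    (Eventually.of_forall fun α => subset_closure (mem_range_self α))
  exact ⟨hub, fun b hb => (upperBounds_closure (range y) ▸ hb) hcl⟩

theorem positive_compact_isCqLevi_general {E F : Type*}
    [NormedAddCommGroup E] [Lattice E] [IsOrderedAddMonoid E]
    [NormedSpace ℝ E]
    [NormedAddCommGroup F] [Lattice F] [HasSolidNorm F] [IsOrderedAddMonoid F]
    [NormedSpace ℝ F]
    (T : E →ₗ[ℝ] F) (hpos : ∀ x : E, 0 ≤ x → 0 ≤ T x)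
    (hcomp : IsCompactOperator (T : E → F)) :
    IsCqLeviMap (T : E → F) := by
  intro ι _ _ _ x hx ⟨C, hC⟩
  have hTx : Monotone (T ∘ x) := ((monotone_iff_map_nonneg T).2 hpos).comp hx
  obtain ⟨y₀, -, hy₀⟩ := (hcomp.isCompact_closure_image_closedBall C).exists_mapClusterPt
    (f := atTop) (u := T ∘ x) <| tendsto_principal.2 <| Eventually.of_forall fun α =>
      subset_closure (mem_image_of_mem T (mem_closedBall_zero_iff.2 (hC α)))
  exact ⟨y₀, hTx.oConvNet_of_isLUB (hTx.isLUB_of_mapClusterPt hy₀)⟩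

/-- every positive compact operator between normed lattices is completely
quasi Levi. -/
theorem positive_compact_isCqLevi {E F : Type*}
    [NormedAddCommGroup E] [Lattice E] [HasSolidNorm E] [IsOrderedAddMonoid E]
    [NormedSpace ℝ E]
    [NormedAddCommGroup F] [Lattice F] [HasSolidNorm F] [IsOrderedAddMonoid F]
    [NormedSpace ℝ F]
    (T : E →ₗ[ℝ] F) (hpos : ∀ x : E, 0 ≤ x → 0 ≤ T x)
    (hcomp : IsCompactOperator (T : E → F)) :
    IsCqLeviMap (T : E → F) :=
  positive_compact_isCqLevi_general T hpos hcomp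
end

section
/- Every quasi σ-Levi operator from a Banach lattice E to a normed lattice F is norm continuous. -/
/-!
If `T` were unbounded, then, splitting vectors into positive and negative parts, we could pick
`v n ≥ 0` with `‖v n‖ ≤ 2⁻ⁿ` and `‖T (v n)‖ > n`. The partial sums of `∑ v n` form a norm-bounded
increasing sequence, so their images are order-Cauchy; in particular their consecutive differences
`T (v n)` are eventually dominated by one fixed element of `F`, and the solid norm of `F` then
bounds `‖T (v n)‖`, a contradiction.
-/

section SolidNorm

variable {E : Type*} [NormedAddCommGroup E] [Lattice E] [IsOrderedAddMonoid E] [HasSolidNorm E]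

theorem norm_posPart_le (a : E) : ‖a⁺‖ ≤ ‖a‖ :=
  norm_le_norm_of_abs_le_abs <| by
    rw [abs_of_nonneg (posPart_nonneg a), ← posPart_add_negPart a]
    exact le_add_of_nonneg_right (negPart_nonneg a)

theorem norm_negPart_le (a : E) : ‖a⁻‖ ≤ ‖a‖ :=
  norm_le_norm_of_abs_le_abs <| by
    rw [abs_of_nonneg (negPart_nonneg a), ← posPart_add_negPart a]
    exact le_add_of_nonneg_left (posPart_nonneg a)

end SolidNorm

theorem OCauchySeq'.exists_norm_sub_le {F : Type*} [NormedAddCommGroup F] [Lattice F]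
    [HasSolidNorm F] {x : ℕ → F} (hx : OCauchySeq' x) :
    ∃ C n₀, ∀ m n, n₀ ≤ m → n₀ ≤ n → ‖x m - x n‖ ≤ C := by
  obtain ⟨D, ⟨d, hd⟩, -, -, hD⟩ := hx
  obtain ⟨p₀, hp₀⟩ := hD d hd
  refine ⟨‖d‖, max p₀.1 p₀.2, fun m n hm hn => norm_le_norm_of_abs_le_abs ?_⟩
  have hmn : |x m - x n - 0| ≤ d :=
    hp₀ (m, n) ⟨le_of_max_le_left hm, le_of_max_le_right hn⟩
  rw [sub_zero] at hmn
  exact hmn.trans (le_abs_self d)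

theorem LinearMap.exists_norm_le_lt_norm_apply_of_not_continuous {𝕜 E F : Type*} [RCLike 𝕜]
    [NormedAddCommGroup E] [NormedSpace 𝕜 E] [SeminormedAddCommGroup F] [NormedSpace 𝕜 F]
    (T : E →ₗ[𝕜] F) (hT : ¬Continuous T) {ε : ℝ} (hε : 0 < ε) (C : ℝ) :
    ∃ u : E, ‖u‖ ≤ ε ∧ C < ‖T u‖ := by
  obtain ⟨x, hx⟩ : ∃ x : E, C / ε * ‖x‖ < ‖T x‖ := by
    by_contra! h
    exact hT (AddMonoidHomClass.continuous_of_bound T (C / ε) h)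
  have hx0 : 0 < ‖x‖ := norm_pos_iff.mpr <| by rintro rfl; simp at hx
  set c : ℝ := ε / ‖x‖ with hc_def
  have hc : 0 < c := by positivity
  refine ⟨(c : 𝕜) • x, ?_, ?_⟩
  · rw [norm_smul, RCLike.norm_ofReal, abs_of_pos hc, div_mul_cancel₀ _ hx0.ne']
  · rw [map_smul, norm_smul, RCLike.norm_ofReal, abs_of_pos hc]
    calc C = c * (C / ε * ‖x‖) := by rw [hc_def]; field_simp
      _ < c * ‖T x‖ := mul_lt_mul_of_pos_left hx hc

theorem exists_nonneg_norm_le_lt_norm_apply_of_not_continuous {E F : Type*}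
    [NormedAddCommGroup E] [Lattice E] [IsOrderedAddMonoid E] [HasSolidNorm E] [NormedSpace ℝ E]
    [SeminormedAddCommGroup F] [NormedSpace ℝ F]
    (T : E →ₗ[ℝ] F) (hT : ¬Continuous T) {ε : ℝ} (hε : 0 < ε) (C : ℝ) :
    ∃ v : E, 0 ≤ v ∧ ‖v‖ ≤ ε ∧ C < ‖T v‖ := by
  obtain ⟨u, huε, hTu⟩ := T.exists_norm_le_lt_norm_apply_of_not_continuous hT hε (2 * C)
  have hsplit : ‖T u‖ ≤ ‖T u⁺‖ + ‖T u⁻‖ := by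
    calc ‖T u‖ = ‖T u⁺ - T u⁻‖ := by rw [← map_sub, posPart_sub_negPart]
      _ ≤ ‖T u⁺‖ + ‖T u⁻‖ := norm_sub_le _ _
  by_cases hpos : C < ‖T u⁺‖
  · exact ⟨u⁺, posPart_nonneg u, (norm_posPart_le u).trans huε, hpos⟩
  · exact ⟨u⁻, negPart_nonneg u, (norm_negPart_le u).trans huε, by linarith⟩

theorem qSigmaLevi_continuous_general {E F : Type*}
    [NormedAddCommGroup E] [Lattice E] [IsOrderedAddMonoid E] [HasSolidNorm E] [NormedSpace ℝ E]
    [NormedAddCommGroup F] [Lattice F] [HasSolidNorm F] [NormedSpace ℝ F]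
    (T : E →ₗ[ℝ] F) (hT : IsQSigmaLeviMap (T : E → F)) :
    Continuous (T : E → F) := by
  by_contra hc
  choose v hv0 hvε hTv using fun n : ℕ =>
    exists_nonneg_norm_le_lt_norm_apply_of_not_continuous T hc (by positivity : 0 < (1 / 2 : ℝ) ^ n) n
  set y : ℕ → E := fun n => ∑ k ∈ Finset.range n, v k
  have hy_mono : Monotone y := fun m n hmn =>
    Finset.sum_le_sum_of_subset_of_nonneg (Finset.range_mono hmn) fun k _ _ => hv0 k
  have hy_bdd : ∀ n, ‖y n‖ ≤ 2 := fun n =>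
    calc ‖y n‖ ≤ ∑ k ∈ Finset.range n, ‖v k‖ := norm_sum_le _ _
      _ ≤ ∑ k ∈ Finset.range n, (1 / 2 : ℝ) ^ k := Finset.sum_le_sum fun k _ => hvε k
      _ ≤ 2 := sum_geometric_two_le n
  obtain ⟨C, n₀, hC⟩ := (hT y hy_mono ⟨2, hy_bdd⟩).exists_norm_sub_le
  set n := max n₀ ⌈C⌉₊
  have hTvn : ‖T (v n)‖ ≤ C := by
    simpa [y, Finset.sum_range_succ] using hC (n + 1) n (by omega) (by omega)
  have hCn : C ≤ n := (Nat.le_ceil C).trans (by exact_mod_cast le_max_right n₀ ⌈C⌉₊)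
  linarith [hTv n]

/-- every quasi σ-Levi operator from a Banach lattice to a normed lattice is
norm continuous. -/
theorem qSigmaLevi_continuous {E F : Type*}
    [NormedAddCommGroup E] [Lattice E] [IsOrderedAddMonoid E] [HasSolidNorm E] [NormedSpace ℝ E] [CompleteSpace E]
    [NormedAddCommGroup F] [Lattice F] [IsOrderedAddMonoid F] [HasSolidNorm F] [NormedSpace ℝ F]
    (T : E →ₗ[ℝ] F) (hT : IsQSigmaLeviMap (T : E → F)) :
    Continuous (T : E → F) :=
  qSigmaLevi_continuous_general T hT
end

section
/- Let (β_k) be a strictly positive real sequence with β_k → 0 and let T : c → c₀ be the diagonal operator T a = Σ_k β_k a_k e_k. Then T is a completely quasi Levi operator but not a σ-Levi operator. -/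
open Filter Topology

/-- The subspace `c` of convergent real sequences. -/
def cSub : Submodule ℝ (ℕ → ℝ) where
  carrier := {x | ∃ l : ℝ, Tendsto x atTop (nhds l)}
  add_mem' := by rintro x y ⟨l, hl⟩ ⟨m, hm⟩; exact ⟨l + m, hl.add hm⟩
  zero_mem' := ⟨0, tendsto_const_nhds⟩
  smul_mem' := by rintro c x ⟨l, hl⟩; exact ⟨c * l, hl.const_mul c⟩

/-- The subspace `c₀` of real null sequences. -/
def c0Sub : Submodule ℝ (ℕ → ℝ) where
  carrier := {x | Tendsto x atTop (nhds 0)}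
  add_mem' := by intro x y hx hy; have h := hx.add hy; rw [add_zero] at h; exact h
  zero_mem' := tendsto_const_nhds
  smul_mem' := by intro c x hx; have h := hx.const_mul c; rw [mul_zero] at h; exact h

/-- The subspace `ℓ^∞` of bounded real sequences. -/
def LinfSub : Submodule ℝ (ℕ → ℝ) where
  carrier := {x | ∃ C : ℝ, ∀ n, |x n| ≤ C}
  add_mem' := by
    rintro x y ⟨C, hC⟩ ⟨D, hD⟩
    exact ⟨C + D, fun n => (abs_add_le _ _).trans (add_le_add (hC n) (hD n))⟩
  zero_mem' := ⟨0, fun n => by simp⟩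
  smul_mem' := by
    rintro c x ⟨C, hC⟩
    exact ⟨|c| * C, fun n => by
      simpa [abs_mul] using mul_le_mul_of_nonneg_left (hC n) (abs_nonneg c)⟩

instance : Lattice cSub :=
  { (inferInstance : PartialOrder cSub) with
    sup := fun x y => ⟨x.1 ⊔ y.1, by
      obtain ⟨l, hl⟩ := x.2; obtain ⟨m, hm⟩ := y.2; exact ⟨l ⊔ m, hl.max hm⟩⟩
    inf := fun x y => ⟨x.1 ⊓ y.1, by
      obtain ⟨l, hl⟩ := x.2; obtain ⟨m, hm⟩ := y.2; exact ⟨l ⊓ m, hl.min hm⟩⟩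
    le_sup_left := fun a b => (le_sup_left : a.1 ≤ a.1 ⊔ b.1)
    le_sup_right := fun a b => (le_sup_right : b.1 ≤ a.1 ⊔ b.1)
    sup_le := fun a b c h₁ h₂ => (sup_le h₁ h₂ : a.1 ⊔ b.1 ≤ c.1)
    inf_le_left := fun a b => (inf_le_left : a.1 ⊓ b.1 ≤ a.1)
    inf_le_right := fun a b => (inf_le_right : a.1 ⊓ b.1 ≤ b.1)
    le_inf := fun a b c h₁ h₂ => (le_inf h₁ h₂ : a.1 ≤ b.1 ⊓ c.1) }

instance : Lattice c0Sub :=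
  { (inferInstance : PartialOrder c0Sub) with
    sup := fun x y => ⟨x.1 ⊔ y.1, by
      have := x.2.max y.2; rw [max_self] at this; exact this⟩
    inf := fun x y => ⟨x.1 ⊓ y.1, by
      have := x.2.min y.2; rw [min_self] at this; exact this⟩
    le_sup_left := fun a b => (le_sup_left : a.1 ≤ a.1 ⊔ b.1)
    le_sup_right := fun a b => (le_sup_right : b.1 ≤ a.1 ⊔ b.1)
    sup_le := fun a b c h₁ h₂ => (sup_le h₁ h₂ : a.1 ⊔ b.1 ≤ c.1)
    inf_le_left := fun a b => (inf_le_left : a.1 ⊓ b.1 ≤ a.1)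
    inf_le_right := fun a b => (inf_le_right : a.1 ⊓ b.1 ≤ b.1)
    le_inf := fun a b c h₁ h₂ => (le_inf h₁ h₂ : a.1 ≤ b.1 ⊓ c.1) }

instance : Lattice LinfSub :=
  { (inferInstance : PartialOrder LinfSub) with
    sup := fun x y => ⟨x.1 ⊔ y.1, by
      obtain ⟨C, hC⟩ := x.2; obtain ⟨D, hD⟩ := y.2
      exact ⟨C ⊔ D, fun n => by
        have h1 := hC n; have h2 := hD n
        simp only [Pi.sup_apply]
        rcases le_total (x.1 n) (y.1 n) with h | h
        · rw [sup_eq_right.2 h]; exact h2.trans le_sup_right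
        · rw [sup_eq_left.2 h]; exact h1.trans le_sup_left⟩⟩
    inf := fun x y => ⟨x.1 ⊓ y.1, by
      obtain ⟨C, hC⟩ := x.2; obtain ⟨D, hD⟩ := y.2
      exact ⟨C ⊔ D, fun n => by
        have h1 := hC n; have h2 := hD n
        simp only [Pi.inf_apply]
        rcases le_total (x.1 n) (y.1 n) with h | h
        · rw [inf_eq_left.2 h]; exact h1.trans le_sup_left
        · rw [inf_eq_right.2 h]; exact h2.trans le_sup_right⟩⟩
    le_sup_left := fun a b => (le_sup_left : a.1 ≤ a.1 ⊔ b.1)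
    le_sup_right := fun a b => (le_sup_right : b.1 ≤ a.1 ⊔ b.1)
    sup_le := fun a b c h₁ h₂ => (sup_le h₁ h₂ : a.1 ⊔ b.1 ≤ c.1)
    inf_le_left := fun a b => (inf_le_left : a.1 ⊓ b.1 ≤ a.1)
    inf_le_right := fun a b => (inf_le_right : a.1 ⊓ b.1 ≤ b.1)
    le_inf := fun a b c h₁ h₂ => (le_inf h₁ h₂ : a.1 ≤ b.1 ⊓ c.1) }

noncomputable instance : Norm cSub := ⟨fun x => ⨆ n, |x.1 n|⟩
noncomputable instance : Norm c0Sub := ⟨fun x => ⨆ n, |x.1 n|⟩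
noncomputable instance : Norm LinfSub := ⟨fun x => ⨆ n, |x.1 n|⟩

/-! For an increasing norm-bounded net `(x α)` in `c`, the coordinatewise supremum `s` is bounded,
so `β * s ∈ c₀`; `T (x α)` increases coordinatewise to `β * s`, and in `c₀` this is order
convergence, dominated by `β * (s - x α)`. Conversely, order convergence in `c₀` forces
coordinatewise convergence. Hence if `T (x n)` order-converged to `T x₀` for `x n` the indicator of
the even numbers below `n`, then `β * x₀ = β * 1_even`, i.e. `x₀ = 1_even`, which is not in `c`. -/

open Set

namespace c0Sub

lemma single_mem (k : ℕ) (d : ℝ) : Pi.single k d ∈ c0Sub :=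
  tendsto_const_nhds.congr' <| (eventually_gt_atTop k).mono fun _ hn => by
    simp [hn.ne']

lemma isGLB_apply_of_isGLB {ι : Type*} {y : ι → c0Sub} (h : IsGLB (range y) 0) (k : ℕ) :
    IsGLB (range fun i => (y i).1 k) 0 := by
  have hy_nonneg : ∀ i, 0 ≤ y i := fun i => h.1 (mem_range_self i)
  refine ⟨forall_mem_range.2 fun i => hy_nonneg i k, fun d hd => ?_⟩
  by_contra! hd_pos
  have hd : ∀ i, d ≤ (y i).1 k := fun i => hd (mem_range_self i)
  have hbump : (⟨Pi.single k d, single_mem k d⟩ : c0Sub) ≤ 0 :=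
    h.2 <| forall_mem_range.2 fun i n => by
      rcases eq_or_ne n k with rfl | hn
      · simpa using hd i
      · simpa [hn] using hy_nonneg i n
  simpa using (hbump k).trans_lt hd_pos

lemma tendsto_apply_of_oConvSeq {z : ℕ → c0Sub} {z₀ : c0Sub} (h : OConvSeq z z₀) (k : ℕ) :
    Tendsto (fun n => (z n).1 k) atTop (𝓝 (z₀.1 k)) := by
  obtain ⟨y, -, hglb, hdom⟩ := h
  refine Metric.tendsto_atTop.2 fun ε hε => ?_
  obtain ⟨_, ⟨m, rfl⟩, -, hm⟩ := (isGLB_apply_of_isGLB hglb k).exists_between hε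
  obtain ⟨n₀, hn₀⟩ := hdom m
  exact ⟨n₀, fun n hn => (hn₀ n hn k).trans_lt hm⟩

lemma oConvNet_of_monotone_of_isLUB {ι : Type*} [Preorder ι] [Nonempty ι]
    [IsDirected ι (· ≤ ·)] {z : ι → c0Sub} (hz : Monotone z) {z₀ : c0Sub}
    (h : ∀ n, IsLUB (range fun α => (z α).1 n) (z₀.1 n)) : OConvNet z z₀ := by
  have hle : ∀ α, z α ≤ z₀ := fun α n => (h n).1 (mem_range_self α)
  refine ⟨range fun α => z₀ - z α, range_nonempty _, ?_, ⟨?_, ?_⟩, ?_⟩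
  · rintro _ ⟨α, rfl⟩ _ ⟨α', rfl⟩
    obtain ⟨γ, hαγ, hα'γ⟩ := directed_of (· ≤ ·) α α'
    exact ⟨_, mem_range_self γ, sub_le_sub_left (hz hαγ) _, sub_le_sub_left (hz hα'γ) _⟩
  · exact forall_mem_range.2 fun α => sub_nonneg.2 (hle α)
  · intro w hw n
    have hw : ∀ α, (z α).1 n ≤ z₀.1 n - w.1 n := fun α => by
      have := hw (mem_range_self α) n
      simp only [Submodule.coe_sub, Pi.sub_apply] at this
      linarith
    have := (h n).2 (forall_mem_range.2 hw)
    simp only [Submodule.coe_zero, Pi.zero_apply]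
    linarith
  · rintro _ ⟨α₀, rfl⟩
    refine ⟨α₀, fun α hα => ?_⟩
    rw [abs_sub_comm, abs_of_nonneg (sub_nonneg.2 (hle α))]
    exact sub_le_sub_left (hz hα) _

end c0Sub

lemma cSub.abs_apply_le_norm (a : cSub) (n : ℕ) : |a.1 n| ≤ ‖a‖ := by
  obtain ⟨l, hl⟩ := a.2
  exact le_ciSup hl.abs.bddAbove_range n

section Diagonal

variable (β : ℕ → ℝ) (T : cSub → c0Sub)

lemma isCqLeviMap_of_diagonal (hβ : ∀ k, 0 ≤ β k) (hβ0 : Tendsto β atTop (𝓝 0))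
    (hT : ∀ (a : cSub) (k : ℕ), (T a).1 k = β k * a.1 k) : IsCqLeviMap T := by
  intro ι _ _ _ x hx ⟨C, hC⟩
  have hbdd : ∀ α n, |(x α).1 n| ≤ C := fun α n => (cSub.abs_apply_le_norm _ n).trans (hC α)
  have hlub : ∀ n, IsLUB (range fun α => (x α).1 n) (⨆ α, (x α).1 n) := fun n =>
    isLUB_ciSup ⟨C, forall_mem_range.2 fun α => (abs_le.1 (hbdd α n)).2⟩
  have hsup_bdd : ∀ n, |⨆ α, (x α).1 n| ≤ C := fun n => by
    have hlower := (abs_le.1 (hbdd (Classical.arbitrary ι) n)).1.trans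
      ((hlub n).1 (mem_range_self _))
    have hupper := (hlub n).2 (forall_mem_range.2 fun α => (abs_le.1 (hbdd α n)).2)
    exact abs_le.2 ⟨hlower, hupper⟩
  have hmem : (fun n => β n * ⨆ α, (x α).1 n) ∈ c0Sub :=
    hβ0.zero_mul_isBoundedUnder_le ⟨C, eventually_map.2 (Eventually.of_forall hsup_bdd)⟩
  refine ⟨⟨_, hmem⟩, c0Sub.oConvNet_of_monotone_of_isLUB
    (fun α α' h n => by simpa only [hT] using mul_le_mul_of_nonneg_left (hx h n) (hβ n))
    fun n => ?_⟩
  simpa only [hT, ← range_comp, Function.comp_def] using (hlub n).mul_left (hβ n)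

def evenIndicatorUpTo (n : ℕ) : cSub :=
  ⟨fun k => if k < n ∧ Even k then 1 else 0, 0, tendsto_const_nhds.congr' <|
    (eventually_ge_atTop n).mono fun _ hk => (if_neg fun h => (h.1.trans_le hk).false).symm⟩

lemma evenIndicatorUpTo_monotone : Monotone evenIndicatorUpTo := fun n m hnm k => by
  dsimp only [evenIndicatorUpTo]
  split_ifs with h₁ h₂
  · exact le_rfl
  · exact absurd ⟨h₁.1.trans_le hnm, h₁.2⟩ h₂
  · exact zero_le_one
  · exact le_rfl

lemma norm_evenIndicatorUpTo_le (n : ℕ) : ‖evenIndicatorUpTo n‖ ≤ 1 :=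
  ciSup_le fun k => by dsimp only [evenIndicatorUpTo]; split_ifs <;> norm_num

lemma not_tendsto_even_indicator (l : ℝ) :
    ¬ Tendsto (fun k : ℕ => if Even k then (1 : ℝ) else 0) atTop (𝓝 l) := by
  intro h
  have h_even := h.comp (strictMono_mul_left_of_pos two_pos).tendsto_atTop
  have h_odd := h.comp (strictMono_id.add_const 1 |>.comp
    (strictMono_mul_left_of_pos two_pos)).tendsto_atTop
  simp only [Function.comp_def, even_two, Even.mul_right, ↓reduceIte, tendsto_const_nhds_iff,
    id_eq, Nat.not_even_bit1] at h_even h_odd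
  exact one_ne_zero (h_even.trans h_odd.symm)

lemma not_isSigmaLeviMap_of_diagonal (hβ : ∀ k, β k ≠ 0)
    (hT : ∀ (a : cSub) (k : ℕ), (T a).1 k = β k * a.1 k) : ¬ IsSigmaLeviMap T := by
  intro hL
  obtain ⟨x₀, hconv⟩ := hL _ evenIndicatorUpTo_monotone ⟨1, norm_evenIndicatorUpTo_le⟩
  have hx₀ : ∀ k, x₀.1 k = if Even k then 1 else 0 := fun k => by
    have hlim : Tendsto (fun n => (T (evenIndicatorUpTo n)).1 k) atTop
        (𝓝 (β k * if Even k then 1 else 0)) :=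
      tendsto_const_nhds.congr' <| (eventually_gt_atTop k).mono fun n hn => by
        simp [hT, evenIndicatorUpTo, hn]
    have := tendsto_nhds_unique (c0Sub.tendsto_apply_of_oConvSeq hconv k) hlim
    rw [hT] at this
    exact mul_left_cancel₀ (hβ k) this
  obtain ⟨l, hl⟩ := x₀.2
  exact not_tendsto_even_indicator l (by simpa only [funext hx₀] using hl)

end Diagonal

/-- for a strictly positive null sequence `β`, the diagonal operator
`T : c → c₀`, `T a = ∑ β k * a k • e k`, is completely quasi Levi but not σ-Levi. -/
theorem diagonal_c_c0_cqLevi_not_sigmaLevi (β : ℕ → ℝ)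
    (hβpos : ∀ k, 0 < β k) (hβ0 : Tendsto β atTop (nhds 0))
    (T : cSub → c0Sub) (hT : ∀ (a : cSub) (k : ℕ), (T a).1 k = β k * a.1 k) :
    IsCqLeviMap T ∧ ¬ IsSigmaLeviMap T :=
  ⟨isCqLeviMap_of_diagonal β T (fun k => (hβpos k).le) hβ0 hT,
    not_isSigmaLeviMap_of_diagonal β T (fun k => (hβpos k).ne') hT⟩
end
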